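/- arXiv:1506.04134 — 2 statements merged into one kernel-verified Lean document; each statement's English description precedes it below -/
import Mathlib

section
/- Let X̄ = (X₀,X₁) and Ȳ = (Y₀,Y₁) be compatible couples of Banach spaces such that Y₀ and Y₁ are intermediate spaces of X̄, and let 0 ≤ θ₀ < θ₁ ≤ 1. Assume that Yᵢ belongs to the class C_K(θᵢ, X̄) with constant Cᵢ for i = 0,1. Then for every y ∈ Σ(Ȳ) and every t > 0, K(t, y; X̄) ≤ max(C₀, C₁) · t^{θ₀} · K(t^{θ₁−θ₀}, y; Ȳ). -/
/-!
Decompose `y = j₀ a + j₁ b` in `Ȳ`. Subadditivity of `K(t, ·; X̄)` and the two `C_K` bounds give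
`K(t, y; X̄) ≤ C₀ t^θ₀ ‖a‖ + C₁ t^θ₁ ‖b‖ ≤ max C₀ C₁ · t^θ₀ · (‖a‖ + t^(θ₁-θ₀) ‖b‖)`,
and the infimum over all decompositions is `K(t^(θ₁-θ₀), y; Ȳ)`.
-/

open MeasureTheory Filter Set

section Couple

variable {E : Type*} [AddCommGroup E] [Module ℝ E] [TopologicalSpace E]
variable {X₀ X₁ Z : Type*}
variable [NormedAddCommGroup X₀] [NormedSpace ℝ X₀]
variable [NormedAddCommGroup X₁] [NormedSpace ℝ X₁]
variable [NormedAddCommGroup Z] [NormedSpace ℝ Z]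

/-- `x` belongs to the sum `X₀ + X₁` of the couple (embedded in `E` via `i₀, i₁`). -/
def InSigma (i₀ : X₀ →L[ℝ] E) (i₁ : X₁ →L[ℝ] E) (x : E) : Prop :=
  ∃ a b, x = i₀ a + i₁ b

/-- `x` belongs to the intersection `X₀ ∩ X₁` of the couple. -/
def InDelta (i₀ : X₀ →L[ℝ] E) (i₁ : X₁ →L[ℝ] E) (x : E) : Prop :=
  ∃ a b, i₀ a = x ∧ i₁ b = x

/-- The K-functional of the couple: `K(t,x) = inf {‖a‖ + t‖b‖ : x = a + b}`. -/
noncomputable def Kfun (i₀ : X₀ →L[ℝ] E) (i₁ : X₁ →L[ℝ] E) (t : ℝ) (x : E) : ℝ :=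
  sInf {r : ℝ | ∃ a b, x = i₀ a + i₁ b ∧ r = ‖a‖ + t * ‖b‖}

/-- The J-functional of the couple: `J(t,x) = max (‖x‖_{X₀}, t‖x‖_{X₁})` for `x ∈ Δ`. -/
noncomputable def Jfun (i₀ : X₀ →L[ℝ] E) (i₁ : X₁ →L[ℝ] E) (t : ℝ) (x : E) : ℝ :=
  sInf {r : ℝ | ∃ a b, i₀ a = x ∧ i₁ b = x ∧ r = max ‖a‖ (t * ‖b‖)}

/-- `Z` (embedded in `E` via `j`) is an intermediate space of the couple `(X₀, X₁)`:
the inclusions `Δ ⊆ Z ⊆ Σ` are continuous (`‖·‖_Δ = J(1,·)` and `‖·‖_Σ = K(1,·)`). -/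
def IsIntermediate (i₀ : X₀ →L[ℝ] E) (i₁ : X₁ →L[ℝ] E) (j : Z →L[ℝ] E) : Prop :=
  (∃ c : ℝ, 0 < c ∧ ∀ x : E, InDelta i₀ i₁ x →
      ∃ z : Z, j z = x ∧ ‖z‖ ≤ c * Jfun i₀ i₁ 1 x) ∧
  (∃ c : ℝ, 0 < c ∧ ∀ z : Z, InSigma i₀ i₁ (j z) ∧ Kfun i₀ i₁ 1 (j z) ≤ c * ‖z‖)

/-- `Z` belongs to the class `C_K(θ, (X₀,X₁))` with constant `C`. -/
def ClassCK (i₀ : X₀ →L[ℝ] E) (i₁ : X₁ →L[ℝ] E) (j : Z →L[ℝ] E) (θ C : ℝ) : Prop :=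
  ∀ z : Z, ∀ t : ℝ, 0 < t → Kfun i₀ i₁ t (j z) ≤ C * t ^ θ * ‖z‖

end Couple

section KFunctional

variable {E : Type*} [AddCommGroup E] [Module ℝ E] [TopologicalSpace E]
variable {X₀ X₁ : Type*} [NormedAddCommGroup X₀] [NormedSpace ℝ X₀]
  [NormedAddCommGroup X₁] [NormedSpace ℝ X₁]
variable (i₀ : X₀ →L[ℝ] E) (i₁ : X₁ →L[ℝ] E) {t : ℝ}

lemma bddBelow_Kfun_set (ht : 0 ≤ t) (x : E) :
    BddBelow {r : ℝ | ∃ a b, x = i₀ a + i₁ b ∧ r = ‖a‖ + t * ‖b‖} := by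
  refine ⟨0, ?_⟩
  rintro r ⟨a, b, -, rfl⟩
  positivity

lemma Kfun_le_of_eq_add (ht : 0 ≤ t) {x : E} {a : X₀} {b : X₁} (h : x = i₀ a + i₁ b) :
    Kfun i₀ i₁ t x ≤ ‖a‖ + t * ‖b‖ :=
  csInf_le (bddBelow_Kfun_set i₀ i₁ ht x) ⟨a, b, h, rfl⟩

lemma le_comp_Kfun_of_forall {f : ℝ → ℝ} (hf : Continuous f) {c : ℝ} (ht : 0 ≤ t) {x : E}
    (hx : InSigma i₀ i₁ x) (h : ∀ a b, x = i₀ a + i₁ b → c ≤ f (‖a‖ + t * ‖b‖)) :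
    c ≤ f (Kfun i₀ i₁ t x) := by
  obtain ⟨a, b, hab⟩ := hx
  refine closure_minimal ?_ (isClosed_le continuous_const hf)
    (csInf_mem_closure ⟨_, a, b, hab, rfl⟩ (bddBelow_Kfun_set i₀ i₁ ht x))
  rintro r ⟨a, b, hab, rfl⟩
  exact h a b hab

lemma Kfun_add_le (ht : 0 ≤ t) {u v : E} (hu : InSigma i₀ i₁ u) (hv : InSigma i₀ i₁ v) :
    Kfun i₀ i₁ t (u + v) ≤ Kfun i₀ i₁ t u + Kfun i₀ i₁ t v := by
  refine le_comp_Kfun_of_forall i₀ i₁ (continuous_id.add continuous_const) ht hu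
    fun a₀ b₀ hu₀ => ?_
  refine le_comp_Kfun_of_forall i₀ i₁ (continuous_const.add continuous_id) ht hv
    fun a₁ b₁ hv₁ => ?_
  have hsum : u + v = i₀ (a₀ + a₁) + i₁ (b₀ + b₁) := by
    rw [hu₀, hv₁, map_add, map_add]; abel
  calc Kfun i₀ i₁ t (u + v) ≤ ‖a₀ + a₁‖ + t * ‖b₀ + b₁‖ := Kfun_le_of_eq_add i₀ i₁ ht hsum
    _ ≤ ‖a₀‖ + ‖a₁‖ + t * (‖b₀‖ + ‖b₁‖) := by gcongr <;> exact norm_add_le _ _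
    _ = ‖a₀‖ + t * ‖b₀‖ + (‖a₁‖ + t * ‖b₁‖) := by ring

variable {Y₀ Y₁ : Type*} [NormedAddCommGroup Y₀] [NormedSpace ℝ Y₀]
  [NormedAddCommGroup Y₁] [NormedSpace ℝ Y₁] {j₀ : Y₀ →L[ℝ] E} {j₁ : Y₁ →L[ℝ] E}

lemma Kfun_add_le_of_classCK {θ₀ θ₁ C₀ C₁ : ℝ} (hmem₀ : ∀ a, InSigma i₀ i₁ (j₀ a))
    (hmem₁ : ∀ b, InSigma i₀ i₁ (j₁ b)) (hCK₀ : ClassCK i₀ i₁ j₀ θ₀ C₀)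
    (hCK₁ : ClassCK i₀ i₁ j₁ θ₁ C₁) (ht : 0 < t) (a : Y₀) (b : Y₁) :
    Kfun i₀ i₁ t (j₀ a + j₁ b) ≤ max C₀ C₁ * t ^ θ₀ * (‖a‖ + t ^ (θ₁ - θ₀) * ‖b‖) := by
  have hpow : t ^ θ₁ = t ^ θ₀ * t ^ (θ₁ - θ₀) := by
    rw [← Real.rpow_add ht, add_sub_cancel]
  have htθ₀ : 0 ≤ t ^ θ₀ := Real.rpow_nonneg ht.le _
  have htθ : 0 ≤ t ^ (θ₁ - θ₀) := Real.rpow_nonneg ht.le _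
  calc Kfun i₀ i₁ t (j₀ a + j₁ b) ≤ Kfun i₀ i₁ t (j₀ a) + Kfun i₀ i₁ t (j₁ b) :=
        Kfun_add_le i₀ i₁ ht.le (hmem₀ a) (hmem₁ b)
    _ ≤ C₀ * t ^ θ₀ * ‖a‖ + C₁ * (t ^ θ₀ * t ^ (θ₁ - θ₀)) * ‖b‖ := by
        rw [← hpow]; exact add_le_add (hCK₀ a t ht) (hCK₁ b t ht)
    _ ≤ max C₀ C₁ * t ^ θ₀ * ‖a‖ + max C₀ C₁ * (t ^ θ₀ * t ^ (θ₁ - θ₀)) * ‖b‖ := by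
        gcongr
        exacts [le_max_left _ _, le_max_right _ _]
    _ = max C₀ C₁ * t ^ θ₀ * (‖a‖ + t ^ (θ₁ - θ₀) * ‖b‖) := by ring

end KFunctional

theorem statement1_general
    {E : Type*} [AddCommGroup E] [Module ℝ E] [TopologicalSpace E]
    {X₀ X₁ Y₀ Y₁ : Type*}
    [NormedAddCommGroup X₀] [NormedSpace ℝ X₀]
    [NormedAddCommGroup X₁] [NormedSpace ℝ X₁]
    [NormedAddCommGroup Y₀] [NormedSpace ℝ Y₀]
    [NormedAddCommGroup Y₁] [NormedSpace ℝ Y₁]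
    (i₀ : X₀ →L[ℝ] E) (i₁ : X₁ →L[ℝ] E) (j₀ : Y₀ →L[ℝ] E) (j₁ : Y₁ →L[ℝ] E)
    (hY₀ : IsIntermediate i₀ i₁ j₀) (hY₁ : IsIntermediate i₀ i₁ j₁)
    (θ₀ θ₁ C₀ C₁ : ℝ)
    (hCK₀ : ClassCK i₀ i₁ j₀ θ₀ C₀) (hCK₁ : ClassCK i₀ i₁ j₁ θ₁ C₁)
    (y : E) (hy : InSigma j₀ j₁ y) (t : ℝ) (ht : 0 < t) :
    Kfun i₀ i₁ t y ≤ max C₀ C₁ * t ^ θ₀ * Kfun j₀ j₁ (t ^ (θ₁ - θ₀)) y := by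
  obtain ⟨-, _, -, hmem₀⟩ := hY₀
  obtain ⟨-, _, -, hmem₁⟩ := hY₁
  refine le_comp_Kfun_of_forall j₀ j₁ (continuous_const_mul _) (Real.rpow_nonneg ht.le _) hy
    fun a b hab => ?_
  rw [hab]
  exact Kfun_add_le_of_classCK i₀ i₁ (fun a => (hmem₀ a).1) (fun b => (hmem₁ b).1) hCK₀ hCK₁ ht a b

/-- if `Y₀ ∈ C_K(θ₀, X̄)` with constant `C₀` and `Y₁ ∈ C_K(θ₁, X̄)` with
constant `C₁`, then for `y ∈ Σ(Ȳ)` and `t > 0` one has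
`K(t, y; X̄) ≤ max C₀ C₁ * t ^ θ₀ * K(t ^ (θ₁ - θ₀), y; Ȳ)`. -/
theorem statement1
    {E : Type*} [AddCommGroup E] [Module ℝ E] [TopologicalSpace E] [T2Space E]
    {X₀ X₁ Y₀ Y₁ : Type*}
    [NormedAddCommGroup X₀] [NormedSpace ℝ X₀] [CompleteSpace X₀]
    [NormedAddCommGroup X₁] [NormedSpace ℝ X₁] [CompleteSpace X₁]
    [NormedAddCommGroup Y₀] [NormedSpace ℝ Y₀] [CompleteSpace Y₀]
    [NormedAddCommGroup Y₁] [NormedSpace ℝ Y₁] [CompleteSpace Y₁]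
    (i₀ : X₀ →L[ℝ] E) (i₁ : X₁ →L[ℝ] E) (j₀ : Y₀ →L[ℝ] E) (j₁ : Y₁ →L[ℝ] E)
    (hi₀ : Function.Injective ⇑i₀) (hi₁ : Function.Injective ⇑i₁)
    (hj₀ : Function.Injective ⇑j₀) (hj₁ : Function.Injective ⇑j₁)
    (hY₀ : IsIntermediate i₀ i₁ j₀) (hY₁ : IsIntermediate i₀ i₁ j₁)
    (θ₀ θ₁ C₀ C₁ : ℝ) (hθ₀ : 0 ≤ θ₀) (hθ₀₁ : θ₀ < θ₁) (hθ₁ : θ₁ ≤ 1)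
    (hCK₀ : ClassCK i₀ i₁ j₀ θ₀ C₀) (hCK₁ : ClassCK i₀ i₁ j₁ θ₁ C₁)
    (y : E) (hy : InSigma j₀ j₁ y) (t : ℝ) (ht : 0 < t) :
    Kfun i₀ i₁ t y ≤ max C₀ C₁ * t ^ θ₀ * Kfun j₀ j₁ (t ^ (θ₁ - θ₀)) y :=
  statement1_general i₀ i₁ j₀ j₁ hY₀ hY₁ θ₀ θ₁ C₀ C₁ hCK₀ hCK₁ y hy t ht
end

section
/- Let Φ be an Orlicz function satisfying the Δ₂-condition, let 1 < p < q < ∞ and set θ = 1/p − 1/q. Let Ȳ = (Y₀,Y₁) be a compatible couple of Banach spaces, y ∈ Σ(Ȳ), and let u be a representation of y with respect to Ȳ such that u is Bochner integrable in Δ(Ȳ) with respect to dt/t over each interval [2^ν, 2^{ν+1}]. For ν ∈ ℤ set u_ν = ∫_{2^ν}^{2^{ν+1}} u(t) dt/t. Then y = Σ_{ν∈ℤ} u_ν is a discrete representation of y with respect to Ȳ, and there is a constant C depending only on Φ, p and q such that Σ_{ν∈ℤ} 2^{ν/θ} Φ(2^{−ν/(θp)} J(2^ν, u_ν; Ȳ))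 ≤ C ∫₀^∞ Φ(t^{−1/p} J(t^{1/p−1/q}, u(t^{1/p−1/q}); Ȳ)) dt (the inequality holding in [0,∞]). -/
open MeasureTheory Filter Set

/-- An Orlicz function: continuous, increasing and convex on `[0,∞)`, vanishing at `0`,
and tending to `∞` at `∞`. -/
structure IsOrliczFunction (Φ : ℝ → ℝ) : Prop where
  map_zero : Φ 0 = 0
  continuousOn : ContinuousOn Φ (Set.Ici 0)
  monotoneOn : MonotoneOn Φ (Set.Ici 0)
  convexOn : ConvexOn ℝ (Set.Ici 0) Φ
  tendsto_atTop : Filter.Tendsto Φ Filter.atTop Filter.atTop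

/-- The `Δ₂`-condition: `Φ(2t) ≤ C Φ(t)` for all `t ≥ 0` and some constant `C > 0`. -/
def Delta2 (Φ : ℝ → ℝ) : Prop :=
  ∃ C : ℝ, 0 < C ∧ ∀ t : ℝ, 0 ≤ t → Φ (2 * t) ≤ C * Φ t
section Couple

variable {E : Type*} [AddCommGroup E] [Module ℝ E] [TopologicalSpace E]
variable {X₀ X₁ Z : Type*}
variable [NormedAddCommGroup X₀] [NormedSpace ℝ X₀]
variable [NormedAddCommGroup X₁] [NormedSpace ℝ X₁]
variable [NormedAddCommGroup Z] [NormedSpace ℝ Z]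

/-- `Z` belongs to the class `C_J(θ, (X₀,X₁))` with constant `C`. -/
def ClassCJ (i₀ : X₀ →L[ℝ] E) (i₁ : X₁ →L[ℝ] E) (j : Z →L[ℝ] E) (θ C : ℝ) : Prop :=
  ∀ z : Z, InDelta i₀ i₁ (j z) → ∀ t : ℝ, 0 < t →
    ‖z‖ ≤ C * t ^ (-θ) * Jfun i₀ i₁ t (j z)

end Couple

/-- `u : (0,∞) → Δ(X̄)` is a representation of `y` with respect to the couple `(X₀,X₁)`:
`u` is strongly measurable with values in `Δ`, and `y = ∫₀^∞ u(t) dt/t` with the improper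
integral converging in `Σ(X̄)` (whose norm is `K(1,·)`). -/
structure IsRepresentation
    {E X₀ X₁ : Type*} [AddCommGroup E] [Module ℝ E] [TopologicalSpace E]
    [NormedAddCommGroup X₀] [NormedSpace ℝ X₀]
    [NormedAddCommGroup X₁] [NormedSpace ℝ X₁]
    (i₀ : X₀ →L[ℝ] E) (i₁ : X₁ →L[ℝ] E) (y : E) (u : ℝ → E) : Prop where
  mem_delta : ∀ t : ℝ, 0 < t → InDelta i₀ i₁ (u t)
  meas₁ : ∃ u₁ : ℝ → X₁, (∀ t : ℝ, 0 < t → i₁ (u₁ t) = u t) ∧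
    MeasureTheory.AEStronglyMeasurable u₁ (MeasureTheory.volume.restrict (Set.Ioi 0))
  repr₀ : ∃ u₀ : ℝ → X₀,
    (∀ t : ℝ, 0 < t → i₀ (u₀ t) = u t) ∧
    MeasureTheory.AEStronglyMeasurable u₀ (MeasureTheory.volume.restrict (Set.Ioi 0)) ∧
    (∀ a b : ℝ, 0 < a → IntervalIntegrable (fun t => t⁻¹ • u₀ t) MeasureTheory.volume a b) ∧
    (∀ a b : ℝ, 0 < a → InSigma i₀ i₁ (y - i₀ (∫ t in a..b, t⁻¹ • u₀ t))) ∧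
    Filter.Tendsto
      (fun ab : ℝ × ℝ => Kfun i₀ i₁ 1 (y - i₀ (∫ t in ab.1..ab.2, t⁻¹ • u₀ t)))
      ((nhdsWithin (0:ℝ) (Set.Ioi 0)) ×ˢ (Filter.atTop : Filter ℝ)) (nhds 0)

/-- `y = Σ_{ν∈ℤ} v ν` is a discrete representation of `y` with respect to the couple
`(Y₀,Y₁)`: each `v ν ∈ Δ(Ȳ)` and the bilateral partial sums converge to `y` in `Σ(Ȳ)`
(whose norm is `K(1,·)`). -/
def IsDiscreteRepresentation
    {E Y₀ Y₁ : Type*} [AddCommGroup E] [Module ℝ E] [TopologicalSpace E]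
    [NormedAddCommGroup Y₀] [NormedSpace ℝ Y₀]
    [NormedAddCommGroup Y₁] [NormedSpace ℝ Y₁]
    (j₀ : Y₀ →L[ℝ] E) (j₁ : Y₁ →L[ℝ] E) (y : E) (v : ℤ → E) : Prop :=
  (∀ ν : ℤ, InDelta j₀ j₁ (v ν)) ∧
  (∀ N M : ℕ, InSigma j₀ j₁ (y - ∑ ν ∈ Finset.Icc (-(N:ℤ)) (M:ℤ), v ν)) ∧
  Filter.Tendsto
    (fun NM : ℕ × ℕ => Kfun j₀ j₁ 1 (y - ∑ ν ∈ Finset.Icc (-(NM.1:ℤ)) (NM.2:ℤ), v ν))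
    Filter.atTop (nhds 0)

/-! On the dyadic block `(2^ν, 2^{ν+1}]` the J-functional of `u_ν` at `2^ν` is dominated by the
mean of `J(t, u(t))` over the block, because `J(·, x)` increases and `dt/t ≈ 2^{-ν} dt` there.
A Jensen-type inequality, proved with a chord of `Φ` so that nothing about `Φ ∘ J` has to be
integrable, moves `Φ` inside the mean at the cost of halving its argument; `Δ₂` absorbs this and
the bounded oscillation of the powers of `t` on a block. Summing over `ν` and substituting
`t = s ^ θ` gives the continuous integral. The pieces lie in `Δ` because the integrals of `u₀` in
`Y₀` and of `u₁` in `Y₁` agree in the ambient space, and their partial sums telescope to the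
truncated integrals `∫_{2^{-N}}^{2^{M+1}} u(t) dt/t`, which converge to `y` in `Σ`. -/

open scoped ENNReal Topology

namespace IsOrliczFunction

variable {Φ : ℝ → ℝ}

theorem nonneg (hΦ : IsOrliczFunction Φ) {x : ℝ} (hx : 0 ≤ x) : 0 ≤ Φ x := by
  simpa [hΦ.map_zero] using hΦ.monotoneOn self_mem_Ici hx hx

theorem div_mul_le_add (hΦ : IsOrliczFunction Φ) {c x : ℝ} (hc : 0 < c) (hx : 0 ≤ x) :
    Φ c / c * x ≤ Φ x + Φ c := by
  rcases le_total x c with hxc | hcx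
  · calc Φ c / c * x ≤ Φ c / c * c := by
          gcongr
          exact div_nonneg (hΦ.nonneg hc.le) hc.le
      _ = Φ c := div_mul_cancel₀ _ hc.ne'
      _ ≤ Φ x + Φ c := le_add_of_nonneg_left (hΦ.nonneg hx)
  · have hslope : Φ c / c ≤ Φ x / x := by
      simpa [hΦ.map_zero] using hΦ.convexOn.secant_mono self_mem_Ici hc.le (hc.le.trans hcx)
        hc.ne' (hc.trans_le hcx).ne' hcx
    calc Φ c / c * x ≤ Φ x / x * x := by gcongr
      _ = Φ x := div_mul_cancel₀ _ (hc.trans_le hcx).ne'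
      _ ≤ Φ x + Φ c := le_add_of_nonneg_right (hΦ.nonneg hc.le)

theorem le_pow_mul_of_le_two_pow (hΦ : IsOrliczFunction Φ) {D : ℝ} (hD0 : 0 ≤ D)
    (hD : ∀ t, 0 ≤ t → Φ (2 * t) ≤ D * Φ t) {k : ℕ} {c x : ℝ} (hc0 : 0 ≤ c) (hc : c ≤ 2 ^ k)
    (hx : 0 ≤ x) : Φ (c * x) ≤ D ^ k * Φ x := by
  have hiter : ∀ n : ℕ, ∀ t, 0 ≤ t → Φ (2 ^ n * t) ≤ D ^ n * Φ t := by
    intro n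
    induction n with
    | zero => simp
    | succ n ih =>
      intro t ht
      calc Φ (2 ^ (n + 1) * t) = Φ (2 ^ n * (2 * t)) := by ring_nf
        _ ≤ D ^ n * Φ (2 * t) := ih _ (by positivity)
        _ ≤ D ^ n * (D * Φ t) := by gcongr; exact hD t ht
        _ = D ^ (n + 1) * Φ t := by ring
  calc Φ (c * x) ≤ Φ (2 ^ k * x) :=
        hΦ.monotoneOn (mem_Ici.2 (by positivity)) (mem_Ici.2 (by positivity)) (by gcongr)
    _ ≤ D ^ k * Φ x := hiter k x hx

/-- Jensen's inequality with the mean halved: integrate the chord bound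
`Φ c / c * x ≤ Φ x + Φ c` at `c = m / 2`. -/
theorem measure_univ_mul_le_lintegral (hΦ : IsOrliczFunction Φ) {α : Type*}
    [MeasurableSpace α] {μ : Measure α} [IsFiniteMeasure μ] {g : α → ℝ} (hg : ∀ x, 0 ≤ g x)
    {m : ℝ} (hm : 0 ≤ m) (h : μ univ * ENNReal.ofReal m ≤ ∫⁻ x, ENNReal.ofReal (g x) ∂μ) :
    μ univ * ENNReal.ofReal (Φ (m / 2)) ≤ ∫⁻ x, ENNReal.ofReal (Φ (g x)) ∂μ := by
  rcases hm.eq_or_lt with rfl | hm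
  · simp [hΦ.map_zero]
  set c := m / 2
  have hc : 0 < c := by positivity
  set s := Φ c / c
  have hsm : ENNReal.ofReal s * ENNReal.ofReal m = 2 * ENNReal.ofReal (Φ c) := by
    rw [← ENNReal.ofReal_mul (div_nonneg (hΦ.nonneg hc.le) hc.le), ← ENNReal.ofReal_ofNat 2,
      ← ENNReal.ofReal_mul zero_le_two]
    congr 1
    field_simp
    ring
  have hpoint : ∀ x, ENNReal.ofReal s * ENNReal.ofReal (g x) - ENNReal.ofReal (Φ c)
      ≤ ENNReal.ofReal (Φ (g x)) := by
    intro x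
    rw [tsub_le_iff_right, ← ENNReal.ofReal_mul (div_nonneg (hΦ.nonneg hc.le) hc.le),
      ← ENNReal.ofReal_add (hΦ.nonneg (hg x)) (hΦ.nonneg hc.le)]
    exact ENNReal.ofReal_le_ofReal (hΦ.div_mul_le_add hc (hg x))
  have hfin : μ univ * ENNReal.ofReal (Φ c) ≠ ∞ := by finiteness
  calc μ univ * ENNReal.ofReal (Φ c)
      = ENNReal.ofReal s * (μ univ * ENNReal.ofReal m) - μ univ * ENNReal.ofReal (Φ c) := by
        rw [mul_left_comm, hsm, mul_left_comm, two_mul, ENNReal.add_sub_cancel_right hfin]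
    _ ≤ ENNReal.ofReal s * ∫⁻ x, ENNReal.ofReal (g x) ∂μ - ∫⁻ _, ENNReal.ofReal (Φ c) ∂μ := by
        rw [lintegral_const, mul_comm (ENNReal.ofReal (Φ c))]
        exact tsub_le_tsub_right (by gcongr) _
    _ = ∫⁻ x, ENNReal.ofReal s * ENNReal.ofReal (g x) ∂μ - ∫⁻ _, ENNReal.ofReal (Φ c) ∂μ := by
        rw [lintegral_const_mul' _ _ ENNReal.ofReal_ne_top]
    _ ≤ ∫⁻ x, (ENNReal.ofReal s * ENNReal.ofReal (g x) - ENNReal.ofReal (Φ c)) ∂μ :=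
        lintegral_sub_le' _ _ aemeasurable_const
    _ ≤ ∫⁻ x, ENNReal.ofReal (Φ (g x)) ∂μ := lintegral_mono hpoint

theorem rpow_mul_le_pow_mul_rpow_mul (hΦ : IsOrliczFunction Φ) {D : ℝ} (hD0 : 0 ≤ D)
    (hD : ∀ t, 0 ≤ t → Φ (2 * t) ≤ D * Φ t) {r σ : ℝ} (hr : 1 ≤ r) (hσ : 0 ≤ σ) {k : ℕ}
    (hσk : σ ≤ k) {a t y : ℝ} (ha : 0 < a) (hat : a ≤ t) (ht : t ≤ 2 * a) (hy : 0 ≤ y) :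
    a ^ (r - 1) * Φ (a ^ (-σ) * y) ≤ D ^ k * (t ^ (r - 1) * Φ (t ^ (-σ) * y)) := by
  have ht0 : 0 < t := ha.trans_le hat
  have hratio : (t / a) ^ σ ≤ 2 ^ k := by
    calc (t / a) ^ σ ≤ 2 ^ σ := by
          gcongr
          rw [div_le_iff₀ ha]
          linarith
      _ ≤ 2 ^ (k : ℝ) := Real.rpow_le_rpow_of_exponent_le one_le_two hσk
      _ = 2 ^ k := Real.rpow_natCast 2 k
  have hsplit : a ^ (-σ) * y = (t / a) ^ σ * (t ^ (-σ) * y) := by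
    rw [Real.div_rpow ht0.le ha.le, Real.rpow_neg ht0.le, Real.rpow_neg ha.le]
    field_simp
  calc a ^ (r - 1) * Φ (a ^ (-σ) * y)
      ≤ t ^ (r - 1) * (D ^ k * Φ (t ^ (-σ) * y)) := by
        rw [hsplit]
        exact mul_le_mul (Real.rpow_le_rpow ha.le hat (by linarith))
          (hΦ.le_pow_mul_of_le_two_pow hD0 hD (by positivity) hratio (by positivity))
          (hΦ.nonneg (by positivity)) (by positivity)
    _ = D ^ k * (t ^ (r - 1) * Φ (t ^ (-σ) * y)) := by ring

theorem ofReal_rpow_mul_le_lintegral_Ioc (hΦ : IsOrliczFunction Φ) {D : ℝ} (hD0 : 0 ≤ D)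
    (hD : ∀ t, 0 ≤ t → Φ (2 * t) ≤ D * Φ t) {r σ : ℝ} (hr : 1 ≤ r) (hσ : 0 ≤ σ) {k : ℕ}
    (hσk : σ ≤ k) {J : ℝ → ℝ} (hJ : ∀ t, 0 ≤ J t) {a x : ℝ} (ha : 0 < a) (hx : 0 ≤ x)
    (h : ENNReal.ofReal a * ENNReal.ofReal x ≤ ∫⁻ t in Ioc a (2 * a), ENNReal.ofReal (J t)) :
    ENNReal.ofReal (a ^ r * Φ (a ^ (-σ) * x)) ≤
      ENNReal.ofReal (D ^ (k + 1)) *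
        ∫⁻ t in Ioc a (2 * a), ENNReal.ofReal (t ^ (r - 1) * Φ (t ^ (-σ) * J t)) := by
  have hμ : volume.restrict (Ioc a (2 * a)) univ = ENNReal.ofReal a := by
    rw [Measure.restrict_apply_univ, Real.volume_Ioc]
    ring_nf
  have hscaled : volume.restrict (Ioc a (2 * a)) univ * ENNReal.ofReal (a ^ (-σ) * x) ≤
      ∫⁻ t in Ioc a (2 * a), ENNReal.ofReal (a ^ (-σ) * J t) := by
    simp_rw [hμ, ENNReal.ofReal_mul (Real.rpow_nonneg ha.le _),
      lintegral_const_mul' _ _ ENNReal.ofReal_ne_top]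
    rw [mul_left_comm]
    gcongr
  have haverage := hΦ.measure_univ_mul_le_lintegral (fun t => by have := hJ t; positivity)
    (by positivity) hscaled
  rw [hμ] at haverage
  have hhalf : a ^ r * Φ (a ^ (-σ) * x) ≤ D * a ^ (r - 1) * (a * Φ (a ^ (-σ) * x / 2)) := by
    have hΦx := hD (a ^ (-σ) * x / 2) (by positivity)
    rw [mul_div_cancel₀ _ two_ne_zero] at hΦx
    calc a ^ r * Φ (a ^ (-σ) * x) ≤ a ^ r * (D * Φ (a ^ (-σ) * x / 2)) := by gcongr
      _ = D * a ^ (r - 1) * (a * Φ (a ^ (-σ) * x / 2)) := by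
        rw [Real.rpow_sub_one ha.ne']
        field_simp
  calc ENNReal.ofReal (a ^ r * Φ (a ^ (-σ) * x))
      ≤ ENNReal.ofReal (D * a ^ (r - 1)) *
          (ENNReal.ofReal a * ENNReal.ofReal (Φ (a ^ (-σ) * x / 2))) := by
        rw [← ENNReal.ofReal_mul ha.le, ← ENNReal.ofReal_mul (by positivity)]
        exact ENNReal.ofReal_le_ofReal hhalf
    _ ≤ ENNReal.ofReal (D * a ^ (r - 1)) *
          ∫⁻ t in Ioc a (2 * a), ENNReal.ofReal (Φ (a ^ (-σ) * J t)) := by gcongr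
    _ = ENNReal.ofReal D *
          ∫⁻ t in Ioc a (2 * a), ENNReal.ofReal (a ^ (r - 1) * Φ (a ^ (-σ) * J t)) := by
        simp_rw [ENNReal.ofReal_mul hD0, ENNReal.ofReal_mul (Real.rpow_nonneg ha.le _),
          lintegral_const_mul' _ _ ENNReal.ofReal_ne_top, mul_assoc]
    _ ≤ ENNReal.ofReal D * ∫⁻ t in Ioc a (2 * a),
          ENNReal.ofReal (D ^ k * (t ^ (r - 1) * Φ (t ^ (-σ) * J t))) := by
        gcongr ENNReal.ofReal D * ?_
        refine setLIntegral_mono' measurableSet_Ioc fun t ht => ENNReal.ofReal_le_ofReal ?_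
        exact hΦ.rpow_mul_le_pow_mul_rpow_mul hD0 hD hr hσ hσk ha ht.1.le ht.2 (hJ t)
    _ = ENNReal.ofReal (D ^ (k + 1)) *
          ∫⁻ t in Ioc a (2 * a), ENNReal.ofReal (t ^ (r - 1) * Φ (t ^ (-σ) * J t)) := by
        simp_rw [ENNReal.ofReal_mul (pow_nonneg hD0 k),
          lintegral_const_mul' _ _ ENNReal.ofReal_ne_top, ← mul_assoc,
          ← ENNReal.ofReal_mul hD0, pow_succ']

end IsOrliczFunction

theorem iUnion_Ioc_zpow_eq_Ioi_zero {b : ℝ} (hb : 1 < b) :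
    ⋃ ν : ℤ, Ioc (b ^ ν) (b ^ (ν + 1)) = Ioi 0 := by
  ext x
  simp only [mem_iUnion, mem_Ioi]
  refine ⟨fun ⟨ν, hν⟩ => (zpow_pos (zero_lt_one.trans hb) ν).trans hν.1, fun hx => ?_⟩
  exact exists_mem_Ioc_zpow hx hb

theorem lintegral_Ioi_zero_eq_tsum_Ioc_zpow {b : ℝ} (hb : 1 < b) (f : ℝ → ℝ≥0∞) :
    ∫⁻ t in Ioi 0, f t = ∑' ν : ℤ, ∫⁻ t in Ioc (b ^ ν) (b ^ (ν + 1)), f t := by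
  have hdisj : Pairwise (Function.onFun Disjoint fun ν : ℤ => Ioc (b ^ ν) (b ^ (ν + 1))) := by
    simpa only [Order.succ_eq_add_one] using (zpow_right_mono₀ hb.le).pairwise_disjoint_on_Ioc_succ
  rw [← iUnion_Ioc_zpow_eq_Ioi_zero hb, lintegral_iUnion (fun _ => measurableSet_Ioc) hdisj]

theorem image_rpow_Ioi_zero {θ : ℝ} (hθ : θ ≠ 0) : (· ^ θ) '' Ioi (0 : ℝ) = Ioi 0 := by
  ext t
  refine ⟨fun ⟨s, hs, hst⟩ => hst ▸ Real.rpow_pos_of_pos hs θ, fun ht => ?_⟩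
  exact ⟨t ^ θ⁻¹, Real.rpow_pos_of_pos ht _, by
    simp [← Real.rpow_mul (le_of_lt ht), hθ]⟩

/-- The substitution `t = s ^ θ`, with `dt = θ s ^ (θ - 1) ds = θ t ^ (1 - 1/θ) ds`. -/
theorem lintegral_Ioi_rpow_mul_eq {θ : ℝ} (hθ : 0 < θ) (G : ℝ → ℝ≥0∞) :
    ∫⁻ t in Ioi 0, ENNReal.ofReal (t ^ (θ⁻¹ - 1)) * G t =
      ENNReal.ofReal θ * ∫⁻ s in Ioi 0, G (s ^ θ) := by
  have hsubst := lintegral_image_eq_lintegral_abs_deriv_mul measurableSet_Ioi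
    (fun s hs => (Real.hasDerivAt_rpow_const (Or.inl (ne_of_gt hs))).hasDerivWithinAt)
    ((Real.rpow_left_injOn hθ.ne').mono Ioi_subset_Ici_self)
    (fun t => ENNReal.ofReal (t ^ (θ⁻¹ - 1)) * G t)
  rw [image_rpow_Ioi_zero hθ.ne'] at hsubst
  rw [hsubst, ← lintegral_const_mul' _ _ ENNReal.ofReal_ne_top]
  refine setLIntegral_congr_fun measurableSet_Ioi fun s hs => ?_
  have hs : (0 : ℝ) < s := hs
  rw [← mul_assoc, ← ENNReal.ofReal_mul (abs_nonneg _), abs_of_pos (by positivity),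
    ← Real.rpow_mul hs.le, mul_assoc, ← Real.rpow_add hs]
  congr 2
  field_simp
  ring_nf
  simp

theorem sum_Icc_intervalIntegral_adjacent {X : Type*} [NormedAddCommGroup X] [NormedSpace ℝ X]
    {f : ℝ → X} {a : ℤ → ℝ} (hf : ∀ k, IntervalIntegrable f volume (a k) (a (k + 1)))
    {m n : ℤ} (hmn : m ≤ n + 1) :
    ∑ k ∈ Finset.Icc m n, ∫ x in a k..a (k + 1), f x = ∫ x in a m..a (n + 1), f x := by
  rw [Int.Icc_eq_finset_map, Finset.sum_map]
  have hsum := intervalIntegral.sum_integral_adjacent_intervals (a := fun k : ℕ => a (m + k))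
    (n := (n + 1 - m).toNat) (fun k _ => by simpa [add_assoc] using hf (m + k))
  simp only [Nat.cast_add, Nat.cast_one, CharP.cast_eq_zero, add_zero, ← add_assoc] at hsum
  rw [Int.toNat_of_nonneg (by omega), add_sub_cancel] at hsum
  simpa using hsum

theorem tendsto_two_zpow_neg_two_zpow_add_one :
    Tendsto (fun NM : ℕ × ℕ => ((2 : ℝ) ^ (-(NM.1 : ℤ)), (2 : ℝ) ^ ((NM.2 : ℤ) + 1))) atTop
      (𝓝[>] 0 ×ˢ atTop) := by
  have hleft : Tendsto (fun N : ℕ => (2 : ℝ) ^ (-(N : ℤ))) atTop (𝓝[>] 0) := by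
    simpa [zpow_neg, zpow_natCast, inv_pow] using
      tendsto_pow_atTop_nhdsWithin_zero_of_lt_one (r := (2 : ℝ)⁻¹) (by norm_num) (by norm_num)
  have hright : Tendsto (fun M : ℕ => (2 : ℝ) ^ ((M : ℤ) + 1)) atTop atTop := by
    simpa [zpow_add_one₀, zpow_natCast] using
      (tendsto_pow_atTop_atTop_of_one_lt (r := (2 : ℝ)) one_lt_two).atTop_mul_const two_pos
  rw [← prod_atTop_atTop_eq]
  exact hleft.prodMap hright

section NormedSpace

variable {X₀ X₁ : Type*}
variable [NormedAddCommGroup X₀] [NormedSpace ℝ X₀]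
variable [NormedAddCommGroup X₁] [NormedSpace ℝ X₁]

theorem ofReal_mul_norm_intervalIntegral_le {f : ℝ → X₀} {g : ℝ → ℝ} {a b c : ℝ} (hab : a ≤ b)
    (hc : 0 ≤ c) (h : ∀ t ∈ Ioc a b, c * ‖f t‖ ≤ g t) :
    ENNReal.ofReal c * ENNReal.ofReal ‖∫ t in a..b, f t‖ ≤
      ∫⁻ t in Ioc a b, ENNReal.ofReal (g t) := by
  rw [intervalIntegral.integral_of_le hab, ofReal_norm]
  calc ENNReal.ofReal c * ‖∫ t in Ioc a b, f t‖ₑ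
      ≤ ENNReal.ofReal c * ∫⁻ t in Ioc a b, ‖f t‖ₑ := by
        gcongr
        exact enorm_integral_le_lintegral_enorm _
    _ = ∫⁻ t in Ioc a b, ENNReal.ofReal (c * ‖f t‖) := by
        simp_rw [ENNReal.ofReal_mul hc, ofReal_norm]
        exact (lintegral_const_mul' _ _ ENNReal.ofReal_ne_top).symm
    _ ≤ ∫⁻ t in Ioc a b, ENNReal.ofReal (g t) :=
        setLIntegral_mono' measurableSet_Ioc fun t ht => ENNReal.ofReal_le_ofReal (h t ht)

/-- `J(a, ∫_a^b f dt/t) ≤ (1/a) ∫_a^b J(t, f t) dt` for the pair of norms of a couple. -/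
theorem ofReal_mul_max_norm_integral_le {f₀ : ℝ → X₀} {f₁ : ℝ → X₁} {a b : ℝ} (ha : 0 < a)
    (hab : a ≤ b) :
    ENNReal.ofReal a *
        ENNReal.ofReal (max ‖∫ t in a..b, t⁻¹ • f₀ t‖ (a * ‖∫ t in a..b, t⁻¹ • f₁ t‖)) ≤
      ∫⁻ t in Ioc a b, ENNReal.ofReal (max ‖f₀ t‖ (t * ‖f₁ t‖)) := by
  rw [ENNReal.ofReal_max, mul_max_of_nonneg _ _ zero_le, ENNReal.ofReal_mul ha.le, ← mul_assoc,
    ← ENNReal.ofReal_mul (q := a) ha.le]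
  refine max_le (ofReal_mul_norm_intervalIntegral_le hab ha.le fun t ht => ?_)
    (ofReal_mul_norm_intervalIntegral_le hab (by positivity) fun t ht => ?_)
  all_goals
    have ht0 : 0 < t := ha.trans ht.1
    rw [norm_smul, norm_inv, Real.norm_of_nonneg ht0.le]
  · calc a * (t⁻¹ * ‖f₀ t‖) ≤ t * (t⁻¹ * ‖f₀ t‖) := by gcongr; exact ht.1.le
      _ = ‖f₀ t‖ := by field_simp
      _ ≤ _ := le_max_left _ _
  · calc a * a * (t⁻¹ * ‖f₁ t‖) ≤ t * t * (t⁻¹ * ‖f₁ t‖) := by gcongr <;> exact ht.1.le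
      _ = t * ‖f₁ t‖ := by field_simp
      _ ≤ _ := le_max_right _ _

end NormedSpace

section Couple

variable {E : Type*} [AddCommGroup E] [Module ℝ E] [TopologicalSpace E]
variable {X₀ X₁ : Type*}
variable [NormedAddCommGroup X₀] [NormedSpace ℝ X₀]
variable [NormedAddCommGroup X₁] [NormedSpace ℝ X₁]

/-- The compatible pairs form a closed subspace of `X₀ × X₁`, and the quotient map by it commutes
with the integral. -/
theorem map_integral_eq_map_integral [T2Space E] [CompleteSpace X₀] [CompleteSpace X₁]
    {α : Type*} [MeasurableSpace α] {μ : Measure α} (i₀ : X₀ →L[ℝ] E) (i₁ : X₁ →L[ℝ] E)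
    {f₀ : α → X₀} {f₁ : α → X₁} (h₀ : Integrable f₀ μ) (h₁ : Integrable f₁ μ)
    (h : ∀ᵐ x ∂μ, i₀ (f₀ x) = i₁ (f₁ x)) :
    i₀ (∫ x, f₀ x ∂μ) = i₁ (∫ x, f₁ x ∂μ) := by
  let S : Submodule ℝ (X₀ × X₁) :=
    LinearMap.eqLocus (i₀.comp (ContinuousLinearMap.fst ℝ X₀ X₁) : X₀ × X₁ →ₗ[ℝ] E)
      (i₁.comp (ContinuousLinearMap.snd ℝ X₀ X₁))
  have : IsClosed (S : Set (X₀ × X₁)) :=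
    isClosed_eq (i₀.comp (.fst ℝ X₀ X₁)).continuous (i₁.comp (.snd ℝ X₀ X₁)).continuous
  have hmem : (∫ x, (f₀ x, f₁ x) ∂μ) ∈ S := by
    rw [← Submodule.Quotient.mk_eq_zero, ← Submodule.mkQ_apply, ← Submodule.coe_mkQL,
      ← S.mkQL.integral_comp_comm (h₀.prodMk h₁)]
    refine integral_eq_zero_of_ae (h.mono fun x hx => ?_)
    simpa using (Submodule.Quotient.mk_eq_zero S).2 hx
  rwa [integral_pair h₀ h₁] at hmem

theorem map_intervalIntegral_inv_smul_eq [T2Space E] [CompleteSpace X₀] [CompleteSpace X₁]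
    (i₀ : X₀ →L[ℝ] E) (i₁ : X₁ →L[ℝ] E) {u : ℝ → E} {u₀ : ℝ → X₀} {u₁ : ℝ → X₁}
    (hu₀ : ∀ t : ℝ, 0 < t → i₀ (u₀ t) = u t) (hu₁ : ∀ t : ℝ, 0 < t → i₁ (u₁ t) = u t)
    {a b : ℝ} (ha : 0 < a) (hab : a ≤ b)
    (h₀ : IntervalIntegrable (fun t => t⁻¹ • u₀ t) volume a b)
    (h₁ : IntervalIntegrable (fun t => t⁻¹ • u₁ t) volume a b) :
    i₀ (∫ t in a..b, t⁻¹ • u₀ t) = i₁ (∫ t in a..b, t⁻¹ • u₁ t) := by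
  rw [intervalIntegral.integral_of_le hab, intervalIntegral.integral_of_le hab]
  refine map_integral_eq_map_integral i₀ i₁ h₀.1 h₁.1
    ((ae_restrict_mem measurableSet_Ioc).mono fun t ht => ?_)
  have ht : 0 < t := ha.trans ht.1
  rw [map_smul, map_smul, hu₀ t ht, hu₁ t ht]

theorem Jfun_eq_max {i₀ : X₀ →L[ℝ] E} {i₁ : X₁ →L[ℝ] E} (h₀ : Function.Injective i₀)
    (h₁ : Function.Injective i₁) {x : E} {a : X₀} {b : X₁} (ha : i₀ a = x) (hb : i₁ b = x)
    (t : ℝ) : Jfun i₀ i₁ t x = max ‖a‖ (t * ‖b‖) := by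
  have hset : {r : ℝ | ∃ a' b', i₀ a' = x ∧ i₁ b' = x ∧ r = max ‖a'‖ (t * ‖b'‖)}
      = {max ‖a‖ (t * ‖b‖)} := by
    ext r
    constructor
    · rintro ⟨a', b', ha', hb', rfl⟩
      rw [h₀ (ha'.trans ha.symm), h₁ (hb'.trans hb.symm), mem_singleton_iff]
    · rintro rfl
      exact ⟨a, b, ha, hb, rfl⟩
  rw [Jfun, hset, csInf_singleton]

theorem IsRepresentation.isDiscreteRepresentation_dyadic {j₀ : X₀ →L[ℝ] E} {j₁ : X₁ →L[ℝ] E}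
    {y : E} {u : ℝ → E} (hrep : IsRepresentation j₀ j₁ y u) (inj₀ : Function.Injective j₀)
    {u₀ : ℝ → X₀} {u₁ : ℝ → X₁} (hu₀ : ∀ t : ℝ, 0 < t → j₀ (u₀ t) = u t)
    (hcompat : ∀ ν : ℤ, j₀ (∫ t in (2 : ℝ) ^ ν..(2 : ℝ) ^ (ν + 1), t⁻¹ • u₀ t) =
      j₁ (∫ t in (2 : ℝ) ^ ν..(2 : ℝ) ^ (ν + 1), t⁻¹ • u₁ t)) :
    IsDiscreteRepresentation j₀ j₁ y
      (fun ν : ℤ => j₀ (∫ t in (2 : ℝ) ^ ν..(2 : ℝ) ^ (ν + 1), t⁻¹ • u₀ t)) := by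
  obtain ⟨w₀, hw₀, -, hw₀int, hw₀sigma, hw₀lim⟩ := hrep.repr₀
  have hcongr : ∀ {a b : ℝ}, 0 < a → a ≤ b →
      ∫ t in a..b, t⁻¹ • u₀ t = ∫ t in a..b, t⁻¹ • w₀ t := by
    intro a b ha hab
    refine intervalIntegral.integral_congr fun t ht => ?_
    have ht : 0 < t := ha.trans_le (uIcc_of_le hab ▸ ht).1
    simp only [inj₀ ((hu₀ t ht).trans (hw₀ t ht).symm)]
  have hpartial : ∀ N M : ℕ,
      ∑ ν ∈ Finset.Icc (-(N : ℤ)) M, j₀ (∫ t in (2 : ℝ) ^ ν..(2 : ℝ) ^ (ν + 1), t⁻¹ • u₀ t) =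
        j₀ (∫ t in (2 : ℝ) ^ (-(N : ℤ))..(2 : ℝ) ^ ((M : ℤ) + 1), t⁻¹ • w₀ t) := by
    intro N M
    rw [← map_sum, ← sum_Icc_intervalIntegral_adjacent (a := fun ν : ℤ => (2 : ℝ) ^ ν)
      (fun ν => hw₀int _ _ (zpow_pos two_pos ν)) (by omega)]
    congr 1
    refine Finset.sum_congr rfl fun ν _ => hcongr (zpow_pos two_pos ν) ?_
    exact zpow_le_zpow_right₀ one_le_two (Int.le_add_one le_rfl)
  refine ⟨fun ν => ⟨_, _, rfl, (hcompat ν).symm⟩, fun N M => ?_, ?_⟩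
  · rw [hpartial]
    exact hw₀sigma _ _ (zpow_pos two_pos _)
  · refine (hw₀lim.comp tendsto_two_zpow_neg_two_zpow_add_one).congr fun NM => ?_
    rw [Function.comp_apply, hpartial]

theorem ofReal_mul_Jfun_dyadic_piece_le {Φ : ℝ → ℝ} (hΦ : IsOrliczFunction Φ) {D : ℝ}
    (hD0 : 0 ≤ D) (hD : ∀ t, 0 ≤ t → Φ (2 * t) ≤ D * Φ t) {p θ : ℝ} (hp : 0 < p)
    (hθ0 : 0 < θ) (hθ1 : θ ≤ 1) {k : ℕ} (hk : (θ * p)⁻¹ ≤ k) {j₀ : X₀ →L[ℝ] E}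
    {j₁ : X₁ →L[ℝ] E} (inj₀ : Function.Injective j₀) (inj₁ : Function.Injective j₁)
    {u₀ : ℝ → X₀} {u₁ : ℝ → X₁} {ν : ℤ}
    (hcompat : j₀ (∫ t in (2 : ℝ) ^ ν..(2 : ℝ) ^ (ν + 1), t⁻¹ • u₀ t) =
      j₁ (∫ t in (2 : ℝ) ^ ν..(2 : ℝ) ^ (ν + 1), t⁻¹ • u₁ t)) :
    ENNReal.ofReal ((2 : ℝ) ^ ((ν : ℝ) / θ) * Φ ((2 : ℝ) ^ (-(ν : ℝ) / (θ * p)) *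
        Jfun j₀ j₁ ((2 : ℝ) ^ ν) (j₀ (∫ t in ((2 : ℝ) ^ ν)..((2 : ℝ) ^ (ν + 1)), t⁻¹ • u₀ t)))) ≤
      ENNReal.ofReal (D ^ (k + 1)) * ∫⁻ t in Ioc ((2 : ℝ) ^ ν) ((2 : ℝ) ^ (ν + 1)),
        ENNReal.ofReal (t ^ (θ⁻¹ - 1) * Φ (t ^ (-(θ * p)⁻¹) * max ‖u₀ t‖ (t * ‖u₁ t‖))) := by
  have ha : (0 : ℝ) < 2 ^ ν := zpow_pos two_pos ν
  have h2a : (2 : ℝ) ^ (ν + 1) = 2 * 2 ^ ν := by rw [zpow_add_one₀ two_ne_zero, mul_comm]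
  have hweight : (2 : ℝ) ^ ((ν : ℝ) / θ) = ((2 : ℝ) ^ ν) ^ θ⁻¹ := by
    rw [← Real.rpow_intCast, ← Real.rpow_mul zero_le_two, div_eq_mul_inv]
  have hscale : (2 : ℝ) ^ (-(ν : ℝ) / (θ * p)) = ((2 : ℝ) ^ ν) ^ (-(θ * p)⁻¹) := by
    rw [← Real.rpow_intCast, ← Real.rpow_mul zero_le_two, neg_div, div_eq_mul_inv, mul_neg]
  rw [hweight, hscale, Jfun_eq_max inj₀ inj₁ rfl hcompat.symm, h2a]
  refine hΦ.ofReal_rpow_mul_le_lintegral_Ioc hD0 hD (one_le_inv₀ hθ0 |>.2 hθ1)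
    (by positivity) hk (fun t => (norm_nonneg _).trans (le_max_left _ _)) ha (by positivity) ?_
  exact ofReal_mul_max_norm_integral_le ha (by linarith)

theorem tsum_ofReal_mul_Jfun_dyadic_le {Φ : ℝ → ℝ} (hΦ : IsOrliczFunction Φ) {D : ℝ}
    (hD0 : 0 ≤ D) (hD : ∀ t, 0 ≤ t → Φ (2 * t) ≤ D * Φ t) {p θ : ℝ} (hp : 0 < p)
    (hθ0 : 0 < θ) (hθ1 : θ ≤ 1) {k : ℕ} (hk : (θ * p)⁻¹ ≤ k) {j₀ : X₀ →L[ℝ] E}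
    {j₁ : X₁ →L[ℝ] E} (inj₀ : Function.Injective j₀) (inj₁ : Function.Injective j₁)
    {u : ℝ → E} {u₀ : ℝ → X₀} {u₁ : ℝ → X₁} (hu₀ : ∀ t : ℝ, 0 < t → j₀ (u₀ t) = u t)
    (hu₁ : ∀ t : ℝ, 0 < t → j₁ (u₁ t) = u t)
    (hcompat : ∀ ν : ℤ, j₀ (∫ t in (2 : ℝ) ^ ν..(2 : ℝ) ^ (ν + 1), t⁻¹ • u₀ t) =
      j₁ (∫ t in (2 : ℝ) ^ ν..(2 : ℝ) ^ (ν + 1), t⁻¹ • u₁ t)) :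
    (∑' ν : ℤ, ENNReal.ofReal ((2 : ℝ) ^ ((ν : ℝ) / θ) *
        Φ ((2 : ℝ) ^ (-(ν : ℝ) / (θ * p)) *
          Jfun j₀ j₁ ((2 : ℝ) ^ ν) (j₀ (∫ t in ((2 : ℝ) ^ ν)..((2 : ℝ) ^ (ν + 1)), t⁻¹ • u₀ t))))) ≤
      ENNReal.ofReal (D ^ (k + 1) * θ) *
        ∫⁻ t in Ioi (0 : ℝ),
          ENNReal.ofReal (Φ (t ^ (-(1 / p)) * Jfun j₀ j₁ (t ^ θ) (u (t ^ θ)))) := by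
  set J : ℝ → ℝ := fun t => max ‖u₀ t‖ (t * ‖u₁ t‖)
  calc _ ≤ ∑' ν : ℤ, ENNReal.ofReal (D ^ (k + 1)) * ∫⁻ t in Ioc ((2 : ℝ) ^ ν) ((2 : ℝ) ^ (ν + 1)),
          ENNReal.ofReal (t ^ (θ⁻¹ - 1) * Φ (t ^ (-(θ * p)⁻¹) * J t)) :=
        ENNReal.tsum_le_tsum fun ν =>
          ofReal_mul_Jfun_dyadic_piece_le hΦ hD0 hD hp hθ0 hθ1 hk inj₀ inj₁ (hcompat ν)
    _ = ENNReal.ofReal (D ^ (k + 1)) * ∫⁻ t in Ioi 0,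
          ENNReal.ofReal (t ^ (θ⁻¹ - 1)) * ENNReal.ofReal (Φ (t ^ (-(θ * p)⁻¹) * J t)) := by
        rw [ENNReal.tsum_mul_left, ← lintegral_Ioi_zero_eq_tsum_Ioc_zpow one_lt_two]
        congr 1
        refine setLIntegral_congr_fun measurableSet_Ioi fun t ht => ?_
        exact ENNReal.ofReal_mul (Real.rpow_nonneg (le_of_lt ht) _)
    _ = ENNReal.ofReal (D ^ (k + 1) * θ) * ∫⁻ s in Ioi (0 : ℝ),
          ENNReal.ofReal (Φ (s ^ (-(1 / p)) * Jfun j₀ j₁ (s ^ θ) (u (s ^ θ)))) := by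
        rw [lintegral_Ioi_rpow_mul_eq hθ0, ENNReal.ofReal_mul (pow_nonneg hD0 _), mul_assoc]
        congr 2
        refine setLIntegral_congr_fun measurableSet_Ioi fun s hs => ?_
        have hs : (0 : ℝ) < s := hs
        have hsθ : 0 < s ^ θ := Real.rpow_pos_of_pos hs θ
        rw [Jfun_eq_max inj₀ inj₁ (hu₀ _ hsθ) (hu₁ _ hsθ), ← Real.rpow_mul hs.le]
        congr 4
        field_simp

end Couple

/-- discretization of a representation `u` of `y`: the pieces
`u_ν = ∫_{2^ν}^{2^{ν+1}} u(t) dt/t` form a discrete representation of `y`, and the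
discrete weighted Φ-moment sum of their J-functionals is dominated by the continuous
one, with `θ = 1/p − 1/q`. -/
theorem statement10 (Φ : ℝ → ℝ) (hΦ : IsOrliczFunction Φ) (hΔ₂ : Delta2 Φ)
    (p q θ : ℝ) (hp : 1 < p) (hpq : p < q) (hθ : θ = 1/p - 1/q) :
    ∃ C : ℝ, 0 < C ∧
      ∀ (E : Type*) [AddCommGroup E] [Module ℝ E] [TopologicalSpace E] [T2Space E]
        (Y₀ Y₁ : Type*)
        [NormedAddCommGroup Y₀] [NormedSpace ℝ Y₀] [CompleteSpace Y₀]
        [NormedAddCommGroup Y₁] [NormedSpace ℝ Y₁] [CompleteSpace Y₁]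
        (j₀ : Y₀ →L[ℝ] E) (j₁ : Y₁ →L[ℝ] E),
        Function.Injective ⇑j₀ → Function.Injective ⇑j₁ →
        ∀ (y : E) (u : ℝ → E) (u₀ : ℝ → Y₀) (u₁ : ℝ → Y₁),
          InSigma j₀ j₁ y → IsRepresentation j₀ j₁ y u →
          (∀ t : ℝ, 0 < t → j₀ (u₀ t) = u t) →
          (∀ t : ℝ, 0 < t → j₁ (u₁ t) = u t) →
          (∀ ν : ℤ, IntervalIntegrable (fun t => t⁻¹ • u₀ t) volume
            ((2:ℝ) ^ ν) ((2:ℝ) ^ (ν+1))) →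
          (∀ ν : ℤ, IntervalIntegrable (fun t => t⁻¹ • u₁ t) volume
            ((2:ℝ) ^ ν) ((2:ℝ) ^ (ν+1))) →
          IsDiscreteRepresentation j₀ j₁ y
            (fun ν : ℤ => j₀ (∫ t in ((2:ℝ) ^ ν)..((2:ℝ) ^ (ν+1)), t⁻¹ • u₀ t)) ∧
          (∑' ν : ℤ, ENNReal.ofReal ((2:ℝ) ^ ((ν:ℝ)/θ) *
              Φ ((2:ℝ) ^ (-(ν:ℝ)/(θ*p)) *
                Jfun j₀ j₁ ((2:ℝ) ^ ν)
                  (j₀ (∫ t in ((2:ℝ) ^ ν)..((2:ℝ) ^ (ν+1)), t⁻¹ • u₀ t))))) ≤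
            ENNReal.ofReal C *
              ∫⁻ t in Set.Ioi (0:ℝ),
                ENNReal.ofReal
                  (Φ (t ^ (-(1/p)) * Jfun j₀ j₁ (t ^ θ) (u (t ^ θ)))) := by
  obtain ⟨D, hD0, hD⟩ := hΔ₂
  have hp0 : 0 < p := one_pos.trans hp
  have hθ0 : 0 < θ := hθ ▸ sub_pos.2 (one_div_lt_one_div_of_lt hp0 hpq)
  have hθ1 : θ ≤ 1 := by
    rw [hθ]
    linarith [(div_lt_one hp0).2 hp, one_div_pos.2 (hp0.trans hpq)]
  refine ⟨D ^ (⌈(θ * p)⁻¹⌉₊ + 1) * θ, by positivity, ?_⟩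
  intro E _ _ _ _ Y₀ Y₁ _ _ _ _ _ _ j₀ j₁ inj₀ inj₁ y u u₀ u₁ _ hrep hu₀ hu₁ hi₀ hi₁
  have hcompat : ∀ ν : ℤ, j₀ (∫ t in (2 : ℝ) ^ ν..(2 : ℝ) ^ (ν + 1), t⁻¹ • u₀ t) =
      j₁ (∫ t in (2 : ℝ) ^ ν..(2 : ℝ) ^ (ν + 1), t⁻¹ • u₁ t) := fun ν =>
    map_intervalIntegral_inv_smul_eq j₀ j₁ hu₀ hu₁ (zpow_pos two_pos ν)
      (zpow_le_zpow_right₀ one_le_two (Int.le_add_one le_rfl)) (hi₀ ν) (hi₁ ν)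
  exact ⟨hrep.isDiscreteRepresentation_dyadic inj₀ hu₀ hcompat,
    tsum_ofReal_mul_Jfun_dyadic_le hΦ hD0.le hD hp0 hθ0 hθ1 (Nat.le_ceil _) inj₀ inj₁ hu₀ hu₁
      hcompat⟩
end
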